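/- arXiv:2406.06898 — 4 statements merged into one kernel-verified Lean document; each statement's English description precedes it below -/
import Mathlib

section
/- Let n ≥ 2, a, b > 0 and 0 < τ ≤ min{a, b}. There exists a constant C = C(n, τ) > 0 such that for any two distinct points P, Q ∈ ℝⁿ and every x ∈ ℝⁿ, one has ⟨x−P⟩^{-a} · ⟨x−Q⟩^{-b} ≤ C |P−Q|^{-τ} (⟨x−P⟩^{-(a+b−τ)} + ⟨x−Q⟩^{-(a+b−τ)}). -/
/-!
Say `⟨x−P⟩ ≤ ⟨x−Q⟩`. The triangle inequality gives `|P−Q| ≤ ⟨x−P⟩ + ⟨x−Q⟩ ≤ 2⟨x−Q⟩`, so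
`⟨x−Q⟩^{-τ} ≤ 2^τ |P−Q|^{-τ}`, while the rest `⟨x−Q⟩^{-(b−τ)}` of `⟨x−Q⟩^{-b}` is at most
`⟨x−P⟩^{-(b−τ)}` because `b ≥ τ`. Hence `C = 2^τ` works.
-/

open Real

/-- `⟨x⟩ := (1 + |x|²)^{1/2}`. -/
noncomputable def jap {n : ℕ} (x : EuclideanSpace ℝ (Fin n)) : ℝ :=
  Real.sqrt (1 + ‖x‖ ^ 2)

lemma one_le_jap {n : ℕ} (x : EuclideanSpace ℝ (Fin n)) : 1 ≤ jap x :=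
  Real.one_le_sqrt.mpr (by nlinarith [sq_nonneg ‖x‖])

lemma norm_le_jap {n : ℕ} (x : EuclideanSpace ℝ (Fin n)) : ‖x‖ ≤ jap x :=
  Real.le_sqrt_of_sq_le (by linarith)

lemma norm_sub_le_jap_add_jap {n : ℕ} (P Q x : EuclideanSpace ℝ (Fin n)) :
    ‖P - Q‖ ≤ jap (x - P) + jap (x - Q) :=
  calc ‖P - Q‖ = ‖(x - Q) - (x - P)‖ := by rw [sub_sub_sub_cancel_left]
    _ ≤ ‖x - Q‖ + ‖x - P‖ := norm_sub_le _ _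
    _ ≤ jap (x - P) + jap (x - Q) := by
        linarith [norm_le_jap (x - P), norm_le_jap (x - Q)]

lemma rpow_neg_mul_rpow_neg_le_of_le {a b τ p q r : ℝ} (hτ0 : 0 ≤ τ) (hτb : τ ≤ b)
    (hp : 0 < p) (hpq : p ≤ q) (hr : 0 < r) (hrq : r ≤ 2 * q) :
    p ^ (-a) * q ^ (-b) ≤ 2 ^ τ * r ^ (-τ) * p ^ (-(a + b - τ)) := by
  have hq : 0 < q := hp.trans_le hpq
  have h_split : q ^ (-b) = q ^ (-(b - τ)) * q ^ (-τ) := by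
    rw [← Real.rpow_add hq]; ring_nf
  have h_far : q ^ (-(b - τ)) ≤ p ^ (-(b - τ)) :=
    Real.rpow_le_rpow_of_nonpos hp hpq (by linarith)
  have h_sep : q ^ (-τ) ≤ (r / 2) ^ (-τ) :=
    Real.rpow_le_rpow_of_nonpos (by positivity) (by linarith) (by linarith)
  have h_half : (r / 2) ^ (-τ) = 2 ^ τ * r ^ (-τ) := by
    rw [Real.div_rpow hr.le zero_le_two, Real.rpow_neg hr.le, Real.rpow_neg zero_le_two]
    field_simp
  have h_merge : p ^ (-a) * p ^ (-(b - τ)) = p ^ (-(a + b - τ)) := by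
    rw [← Real.rpow_add hp]; ring_nf
  calc p ^ (-a) * q ^ (-b) = p ^ (-a) * (q ^ (-(b - τ)) * q ^ (-τ)) := by rw [h_split]
    _ ≤ p ^ (-a) * (p ^ (-(b - τ)) * (r / 2) ^ (-τ)) := by gcongr
    _ = 2 ^ τ * r ^ (-τ) * p ^ (-(a + b - τ)) := by rw [h_half, ← h_merge]; ring

lemma rpow_neg_mul_rpow_neg_le {a b τ p q r : ℝ} (hτ0 : 0 ≤ τ) (hτa : τ ≤ a) (hτb : τ ≤ b)
    (hp : 0 < p) (hq : 0 < q) (hr : 0 < r) (hrpq : r ≤ p + q) :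
    p ^ (-a) * q ^ (-b) ≤
      2 ^ τ * r ^ (-τ) * (p ^ (-(a + b - τ)) + q ^ (-(a + b - τ))) := by
  wlog hpq : p ≤ q generalizing a b p q
  · have h := this hτb hτa hq hp (by linarith) (le_of_not_ge hpq)
    rwa [mul_comm, add_comm b a, add_comm (q ^ _)] at h
  calc p ^ (-a) * q ^ (-b) ≤ 2 ^ τ * r ^ (-τ) * p ^ (-(a + b - τ)) :=
        rpow_neg_mul_rpow_neg_le_of_le hτ0 hτb hp hpq hr (by linarith)
    _ ≤ 2 ^ τ * r ^ (-τ) * (p ^ (-(a + b - τ)) + q ^ (-(a + b - τ))) := by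
        gcongr
        exact le_add_of_nonneg_right (by positivity)

theorem stmt0_general (n : ℕ) (a b τ : ℝ)
    (hτ0 : 0 < τ) (hτ : τ ≤ min a b) :
    ∃ C : ℝ, 0 < C ∧ ∀ P Q : EuclideanSpace ℝ (Fin n), P ≠ Q →
      ∀ x : EuclideanSpace ℝ (Fin n),
        jap (x - P) ^ (-a) * jap (x - Q) ^ (-b) ≤
          C * ‖P - Q‖ ^ (-τ) *
            (jap (x - P) ^ (-(a + b - τ)) + jap (x - Q) ^ (-(a + b - τ))) :=
  ⟨2 ^ τ, by positivity, fun P Q hPQ x =>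
    rpow_neg_mul_rpow_neg_le hτ0.le (hτ.trans (min_le_left a b)) (hτ.trans (min_le_right a b))
      (zero_lt_one.trans_le (one_le_jap _)) (zero_lt_one.trans_le (one_le_jap _))
      (norm_pos_iff.mpr (sub_ne_zero_of_ne hPQ)) (norm_sub_le_jap_add_jap P Q x)⟩

/-- Let `n ≥ 2`, `a, b > 0` and `0 < τ ≤ min{a, b}`. There exists `C = C(n, τ) > 0`
such that for any two distinct points `P, Q ∈ ℝⁿ` and every `x ∈ ℝⁿ`,
`⟨x−P⟩^{-a} ⟨x−Q⟩^{-b} ≤ C |P−Q|^{-τ} (⟨x−P⟩^{-(a+b−τ)} + ⟨x−Q⟩^{-(a+b−τ)})`. -/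
theorem stmt0 (n : ℕ) (hn : 2 ≤ n) (a b τ : ℝ) (ha : 0 < a) (hb : 0 < b)
    (hτ0 : 0 < τ) (hτ : τ ≤ min a b) :
    ∃ C : ℝ, 0 < C ∧ ∀ P Q : EuclideanSpace ℝ (Fin n), P ≠ Q →
      ∀ x : EuclideanSpace ℝ (Fin n),
        jap (x - P) ^ (-a) * jap (x - Q) ^ (-b) ≤
          C * ‖P - Q‖ ^ (-τ) *
            (jap (x - P) ^ (-(a + b - τ)) + jap (x - Q) ^ (-(a + b - τ))) :=
  stmt0_general n a b τ hτ0 hτ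
end

section
/- For every β > 0 there is a constant C = C(β) > 0 such that for all a > 0 and b ∈ ℝ: (i) if 0 < β ≤ 1 then ||a+b|^β − a^β| ≤ C min{|b|^β, a^{β−1}|b|}; (ii) if 1 < β ≤ 2 then ||a+b|^{β−1}(a+b) − a^β − β a^{β−1} b| ≤ C min{|b|^β, a^{β−2} b²}; (iii) if 2 < β ≤ 3 then ||a+b|^β − a^β − β a^{β−1} b − (1/2)β(β−1) a^{β−2} b²| ≤ C min{|b|^β, a^{β−3}|b|³}. -/
/-!
Writing `b = a t`, both sides of each inequality carry the factor `a ^ β`, so it suffices to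
take `a = 1`. For `|t| ≤ 1/2` the three expressions are the Taylor remainders of `(1 + t) ^ β` of
orders one, two and three. The derivative of each remainder is `β` times the previous remainder
for the exponent `β - 1`, so the mean value theorem gives the bounds `C |t|`, `C t²`, `C |t|³`
one after the other. For `|t| ≥ 1/2` every term is at most a constant times `|t| ^ β`. Since
`β ≤ k`, `|t| ^ k ≤ |t| ^ β` for `|t| ≤ 1`, and `|t| ^ β ≤ 8 |t| ^ k` for `|t| ≥ 1/2`, so both
bounds together give the minimum.
-/

open Real

lemma abs_sub_le_mul_abs_of_abs_deriv_le {f f' : ℝ → ℝ} {t M : ℝ}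
    (hf : ∀ x, |x| ≤ |t| → HasDerivAt f (f' x) x) (hM : ∀ x, |x| ≤ |t| → |f' x| ≤ M) :
    |f t - f 0| ≤ M * |t| := by
  simpa using (convex_Icc (-|t|) |t|).norm_image_sub_le_of_norm_hasDerivWithin_le
    (fun x hx => (hf x (abs_le.2 hx)).hasDerivWithinAt) (fun x hx => hM x (abs_le.2 hx))
    ⟨neg_nonpos.2 (abs_nonneg t), abs_nonneg t⟩ ⟨neg_abs_le t, le_abs_self t⟩

lemma hasDerivAt_one_add_rpow {x : ℝ} (hx : 0 < 1 + x) (γ : ℝ) :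
    HasDerivAt (fun u => (1 + u) ^ γ) (γ * (1 + x) ^ (γ - 1)) x := by
  simpa using ((hasDerivAt_id x).const_add 1).rpow_const (p := γ) (Or.inl hx.ne')

lemma one_add_rpow_le_two {x p : ℝ} (hx : |x| ≤ 1 / 2) (hp0 : p ≤ 0) (hp1 : -1 ≤ p) :
    (1 + x) ^ p ≤ 2 :=
  calc (1 + x) ^ p ≤ (1 / 2) ^ p :=
        rpow_le_rpow_of_nonpos (by norm_num) (by linarith [neg_abs_le x]) hp0
    _ ≤ (1 / 2) ^ (-1 : ℝ) := rpow_le_rpow_of_exponent_ge (by norm_num) (by norm_num) hp1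
    _ = 2 := by norm_num

lemma abs_one_add_rpow_sub_one_le {γ t : ℝ} (hγ0 : 0 < γ) (hγ1 : γ ≤ 1) (ht : |t| ≤ 1 / 2) :
    |(1 + t) ^ γ - 1| ≤ 2 * |t| := by
  have h := abs_sub_le_mul_abs_of_abs_deriv_le (f := fun u => (1 + u) ^ γ) (M := 2)
    (fun x hx => hasDerivAt_one_add_rpow (by linarith [neg_abs_le x]) γ) fun x hx => by
      have hx' : 0 < 1 + x := by linarith [neg_abs_le x]
      have h2 := one_add_rpow_le_two (hx.trans ht) (p := γ - 1) (by linarith) (by linarith)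
      rw [abs_of_nonneg (mul_nonneg hγ0.le (rpow_nonneg hx'.le _))]
      nlinarith
  simpa using h

lemma abs_one_add_rpow_sub_linear_le {β t : ℝ} (hβ1 : 1 < β) (hβ2 : β ≤ 2) (ht : |t| ≤ 1 / 2) :
    |(1 + t) ^ β - 1 - β * t| ≤ 4 * t ^ 2 := by
  have h := abs_sub_le_mul_abs_of_abs_deriv_le (f := fun u => (1 + u) ^ β - β * u)
    (f' := fun x => β * ((1 + x) ^ (β - 1) - 1)) (M := 4 * |t|)
    (fun x hx => ((hasDerivAt_one_add_rpow (by linarith [neg_abs_le x]) β).sub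
      ((hasDerivAt_id x).const_mul β)).congr_deriv (by ring)) fun x hx => by
      have h1 := abs_one_add_rpow_sub_one_le (γ := β - 1) (by linarith) (by linarith) (hx.trans ht)
      rw [abs_mul, abs_of_pos (by linarith)]
      nlinarith [abs_nonneg x]
  calc |(1 + t) ^ β - 1 - β * t| = |(1 + t) ^ β - β * t - ((1 + 0) ^ β - β * 0)| := by
        norm_num; ring_nf
    _ ≤ 4 * |t| * |t| := h
    _ = 4 * t ^ 2 := by rw [mul_assoc, abs_mul_abs_self, sq]

lemma abs_one_add_rpow_sub_quadratic_le {β t : ℝ} (hβ2 : 2 < β) (hβ3 : β ≤ 3)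
    (ht : |t| ≤ 1 / 2) :
    |(1 + t) ^ β - 1 - β * t - β * (β - 1) / 2 * t ^ 2| ≤ 12 * |t| ^ 3 := by
  have h := abs_sub_le_mul_abs_of_abs_deriv_le
    (f := fun u => (1 + u) ^ β - β * u - β * (β - 1) / 2 * u ^ 2)
    (f' := fun x => β * ((1 + x) ^ (β - 1) - 1 - (β - 1) * x)) (M := 12 * t ^ 2)
    (fun x hx => (((hasDerivAt_one_add_rpow (by linarith [neg_abs_le x]) β).sub
      ((hasDerivAt_id x).const_mul β)).sub ((hasDerivAt_pow 2 x).const_mul _)).congr_deriv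
        (by ring)) fun x hx => by
      have h1 := abs_one_add_rpow_sub_linear_le (β := β - 1) (by linarith) (by linarith)
        (hx.trans ht)
      have hx2 : x ^ 2 ≤ t ^ 2 := sq_le_sq.2 hx
      rw [abs_mul, abs_of_pos (by linarith)]
      nlinarith [sq_nonneg x]
  calc |(1 + t) ^ β - 1 - β * t - β * (β - 1) / 2 * t ^ 2|
      = |(1 + t) ^ β - β * t - β * (β - 1) / 2 * t ^ 2
          - ((1 + 0) ^ β - β * 0 - β * (β - 1) / 2 * 0 ^ 2)| := by
        norm_num; ring_nf
    _ ≤ 12 * t ^ 2 * |t| := h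
    _ = 12 * |t| ^ 3 := by rw [← sq_abs t]; ring

lemma abs_rpow_le_eight_mul_abs_rpow {p q t : ℝ} (hp : 0 ≤ p) (hpq : p ≤ q) (hq : q ≤ 3)
    (ht : 1 / 2 ≤ |t|) : |t| ^ p ≤ 8 * |t| ^ q := by
  have h1 : (2 * |t|) ^ p ≤ (2 * |t|) ^ q := rpow_le_rpow_of_exponent_le (by linarith) hpq
  rw [mul_rpow zero_le_two (abs_nonneg t), mul_rpow zero_le_two (abs_nonneg t)] at h1
  have h2 : (1 : ℝ) ≤ 2 ^ p := one_le_rpow one_le_two hp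
  have h3 : (2 : ℝ) ^ q ≤ 8 :=
    calc (2 : ℝ) ^ q ≤ 2 ^ (3 : ℝ) := rpow_le_rpow_of_exponent_le one_le_two hq
      _ = 8 := by norm_num
  nlinarith [rpow_nonneg (abs_nonneg t) p, rpow_nonneg (abs_nonneg t) q]

lemma abs_one_add_rpow_le {β t : ℝ} (hβ0 : 0 ≤ β) (hβ3 : β ≤ 3) (ht : 1 / 2 ≤ |t|) :
    |1 + t| ^ β ≤ 27 * |t| ^ β :=
  calc |1 + t| ^ β ≤ (3 * |t|) ^ β := by
        refine rpow_le_rpow (abs_nonneg _) ?_ hβ0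
        linarith [abs_add_le 1 t, abs_one (α := ℝ)]
    _ = 3 ^ β * |t| ^ β := mul_rpow zero_le_three (abs_nonneg t)
    _ ≤ 27 * |t| ^ β := by
        gcongr
        calc (3 : ℝ) ^ β ≤ 3 ^ (3 : ℝ) := rpow_le_rpow_of_exponent_le (by norm_num) hβ3
          _ = 27 := by norm_num

lemma le_mul_min_abs_rpow_pow {β x A B C t : ℝ} {k : ℕ} (hβ : 0 < β) (hβk : β ≤ k)
    (hk : k ≤ 3) (hA : 0 ≤ A) (hB : 0 ≤ B) (hC : A + 8 * B ≤ C)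
    (hsmall : |t| ≤ 1 / 2 → x ≤ A * |t| ^ k) (hlarge : 1 / 2 ≤ |t| → x ≤ B * |t| ^ β) :
    x ≤ C * min (|t| ^ β) (|t| ^ k) := by
  rw [mul_min_of_nonneg _ _ (by linarith), ← rpow_natCast]
  rw [← rpow_natCast] at hsmall
  have hβ0 := rpow_nonneg (abs_nonneg t) β
  have hk0 := rpow_nonneg (abs_nonneg t) (k : ℝ)
  rcases le_total |t| (1 / 2) with ht | ht
  · have hkβ : |t| ^ (k : ℝ) ≤ |t| ^ β :=
      rpow_le_rpow_of_exponent_ge' (abs_nonneg t) (by linarith) hβ.le hβk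
    have := hsmall ht
    refine le_min ?_ ?_ <;> nlinarith
  · have hβk := abs_rpow_le_eight_mul_abs_rpow hβ.le hβk (by exact_mod_cast hk) ht
    have := hlarge ht
    refine le_min ?_ ?_ <;> nlinarith

lemma abs_abs_rpow_sub_one_mul_self {x β : ℝ} (hβ : β ≠ 0) : |(|x| ^ (β - 1) * x)| = |x| ^ β := by
  rcases eq_or_ne x 0 with rfl | hx
  · simp [zero_rpow hβ]
  · rw [abs_mul, abs_of_nonneg (rpow_nonneg (abs_nonneg x) _), rpow_sub_one (abs_ne_zero.2 hx),
      div_mul_cancel₀ _ (abs_ne_zero.2 hx)]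

lemma abs_abs_one_add_rpow_sub_one_le_mul_min {β t : ℝ} (hβ0 : 0 < β) (hβ1 : β ≤ 1) :
    |(|1 + t| ^ β - 1)| ≤ 1000 * min (|t| ^ β) |t| := by
  refine (le_mul_min_abs_rpow_pow (k := 1) (A := 2) (B := 35) (C := 1000) hβ0
    (by exact_mod_cast hβ1) (by norm_num) (by norm_num) (by norm_num) (by norm_num) ?_ ?_).trans_eq
    (by rw [pow_one])
  · intro ht
    rw [abs_of_pos (by linarith [neg_abs_le t] : 0 < 1 + t), pow_one]
    exact abs_one_add_rpow_sub_one_le hβ0 hβ1 ht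
  · intro ht
    have h27 := abs_one_add_rpow_le hβ0.le (by linarith) ht
    have h8 : 1 ≤ 8 * |t| ^ β := by
      simpa using abs_rpow_le_eight_mul_abs_rpow le_rfl hβ0.le (by linarith) ht
    calc |(|1 + t| ^ β - 1)| ≤ |(|1 + t| ^ β)| + |1| := abs_sub _ _
      _ ≤ 35 * |t| ^ β := by
        rw [abs_of_nonneg (rpow_nonneg (abs_nonneg _) _), abs_one]; linarith

lemma abs_abs_one_add_rpow_mul_sub_linear_le_mul_min {β t : ℝ} (hβ1 : 1 < β) (hβ2 : β ≤ 2) :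
    |(|1 + t| ^ (β - 1) * (1 + t) - 1 - β * t)| ≤ 1000 * min (|t| ^ β) (t ^ 2) := by
  have hβ0 : 0 < β := by linarith
  refine (le_mul_min_abs_rpow_pow (k := 2) (A := 4) (B := 51) (C := 1000) hβ0
    (by exact_mod_cast hβ2) (by norm_num) (by norm_num) (by norm_num) (by norm_num) ?_ ?_).trans_eq
    (by rw [sq_abs])
  · intro ht
    have h1t : 0 < 1 + t := by linarith [neg_abs_le t]
    rw [abs_of_pos h1t, rpow_sub_one h1t.ne', div_mul_cancel₀ _ h1t.ne', sq_abs]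
    exact abs_one_add_rpow_sub_linear_le hβ1 hβ2 ht
  · intro ht
    have h27 := abs_one_add_rpow_le hβ0.le (by linarith) ht
    have h8 : 1 ≤ 8 * |t| ^ β := by
      simpa using abs_rpow_le_eight_mul_abs_rpow le_rfl hβ0.le (by linarith) ht
    have h8' : |t| ≤ 8 * |t| ^ β := by
      simpa using abs_rpow_le_eight_mul_abs_rpow zero_le_one hβ1.le (by linarith) ht
    calc |(|1 + t| ^ (β - 1) * (1 + t) - 1 - β * t)|
        ≤ |(|1 + t| ^ (β - 1) * (1 + t))| + |1| + |β * t| :=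
          (abs_sub _ _).trans (add_le_add_left (abs_sub _ _) _)
      _ = |1 + t| ^ β + 1 + β * |t| := by
          rw [abs_abs_rpow_sub_one_mul_self hβ0.ne', abs_one, abs_mul, abs_of_pos hβ0]
      _ ≤ 51 * |t| ^ β := by nlinarith [abs_nonneg t]

lemma abs_abs_one_add_rpow_sub_quadratic_le_mul_min {β t : ℝ} (hβ2 : 2 < β) (hβ3 : β ≤ 3) :
    |(|1 + t| ^ β - 1 - β * t - β * (β - 1) / 2 * t ^ 2)| ≤ 1000 * min (|t| ^ β) (|t| ^ 3) := by
  have hβ0 : 0 < β := by linarith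
  refine le_mul_min_abs_rpow_pow (k := 3) (A := 12) (B := 83) (C := 1000) hβ0
    (by exact_mod_cast hβ3) le_rfl (by norm_num) (by norm_num) (by norm_num) ?_ ?_
  · intro ht
    rw [abs_of_pos (by linarith [neg_abs_le t] : 0 < 1 + t)]
    exact abs_one_add_rpow_sub_quadratic_le hβ2 hβ3 ht
  · intro ht
    have h27 := abs_one_add_rpow_le hβ0.le hβ3 ht
    have h8 : 1 ≤ 8 * |t| ^ β := by
      simpa using abs_rpow_le_eight_mul_abs_rpow le_rfl hβ0.le hβ3 ht
    have h8' : |t| ≤ 8 * |t| ^ β := by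
      simpa using abs_rpow_le_eight_mul_abs_rpow zero_le_one (by linarith) hβ3 ht
    have h8'' : t ^ 2 ≤ 8 * |t| ^ β := by
      simpa using abs_rpow_le_eight_mul_abs_rpow zero_le_two hβ2.le hβ3 ht
    have hc : 0 ≤ β * (β - 1) / 2 := by nlinarith
    have hβt : β * |t| ≤ 3 * |t| := mul_le_mul_of_nonneg_right hβ3 (abs_nonneg t)
    have hct : β * (β - 1) / 2 * t ^ 2 ≤ 3 * t ^ 2 :=
      mul_le_mul_of_nonneg_right (by nlinarith) (sq_nonneg t)
    calc |(|1 + t| ^ β - 1 - β * t - β * (β - 1) / 2 * t ^ 2)|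
        ≤ |(|1 + t| ^ β)| + |1| + |β * t| + |β * (β - 1) / 2 * t ^ 2| :=
          (abs_sub _ _).trans (add_le_add_left ((abs_sub _ _).trans
            (add_le_add_left (abs_sub _ _) _)) _)
      _ = |1 + t| ^ β + 1 + β * |t| + β * (β - 1) / 2 * t ^ 2 := by
          rw [abs_of_nonneg (rpow_nonneg (abs_nonneg _) _), abs_one, abs_mul, abs_of_pos hβ0,
            abs_of_nonneg (mul_nonneg hc (sq_nonneg t))]
      _ ≤ 83 * |t| ^ β := by linarith

lemma abs_mul_le_mul_min_mul {s x y z C : ℝ} (hs : 0 < s) (h : |x| ≤ C * min y z) :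
    |s * x| ≤ C * min (s * y) (s * z) := by
  rw [abs_mul, abs_of_pos hs, ← mul_min_of_nonneg _ _ hs.le, mul_left_comm]
  exact mul_le_mul_of_nonneg_left h hs.le

/-- For every `β > 0` there is `C = C(β) > 0` such that for all `a > 0` and `b ∈ ℝ`:
(i) if `0 < β ≤ 1` then `||a+b|^β − a^β| ≤ C min{|b|^β, a^{β−1}|b|}`;
(ii) if `1 < β ≤ 2` then `||a+b|^{β−1}(a+b) − a^β − β a^{β−1} b| ≤ C min{|b|^β, a^{β−2} b²}`;
(iii) if `2 < β ≤ 3` then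
`||a+b|^β − a^β − β a^{β−1} b − (1/2)β(β−1) a^{β−2} b²| ≤ C min{|b|^β, a^{β−3}|b|³}`. -/
theorem stmt10 (β : ℝ) (hβ : 0 < β) :
    ∃ C : ℝ, 0 < C ∧ ∀ a b : ℝ, 0 < a →
      ((β ≤ 1 →
          abs (|a + b| ^ β - a ^ β) ≤ C * min (|b| ^ β) (a ^ (β - 1) * |b|)) ∧
        (1 < β → β ≤ 2 →
          abs (|a + b| ^ (β - 1) * (a + b) - a ^ β - β * a ^ (β - 1) * b) ≤
            C * min (|b| ^ β) (a ^ (β - 2) * b ^ 2)) ∧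
        (2 < β → β ≤ 3 →
          abs (|a + b| ^ β - a ^ β - β * a ^ (β - 1) * b -
              (1 / 2) * β * (β - 1) * a ^ (β - 2) * b ^ 2) ≤
            C * min (|b| ^ β) (a ^ (β - 3) * |b| ^ 3))) := by
  refine ⟨1000, by norm_num, fun a b ha => ?_⟩
  obtain ⟨t, rfl⟩ : ∃ t, b = a * t := ⟨b / a, by field_simp⟩
  have haβ : 0 < a ^ β := rpow_pos_of_pos ha β
  have hsum : |a + a * t| = a * |1 + t| := by rw [← mul_one_add, abs_mul, abs_of_pos ha]
  have hpow : |a * t| ^ β = a ^ β * |t| ^ β := by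
    rw [abs_mul, abs_of_pos ha, mul_rpow ha.le (abs_nonneg t)]
  rw [hpow, hsum, mul_rpow ha.le (abs_nonneg _), mul_rpow ha.le (abs_nonneg _),
    rpow_sub_one ha.ne', rpow_sub ha, rpow_sub ha, rpow_ofNat, rpow_ofNat, abs_mul, abs_of_pos ha]
  refine ⟨fun hβ1 => ?_, fun hβ1 hβ2 => ?_, fun hβ2 hβ3 => ?_⟩
  · convert abs_mul_le_mul_min_mul haβ (abs_abs_one_add_rpow_sub_one_le_mul_min hβ hβ1)
      using 3 <;> field_simp
  · convert abs_mul_le_mul_min_mul haβ (abs_abs_one_add_rpow_mul_sub_linear_le_mul_min hβ1 hβ2)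
      using 3 <;> field_simp
  · convert abs_mul_le_mul_min_mul haβ (abs_abs_one_add_rpow_sub_quadratic_le_mul_min hβ2 hβ3)
      using 3 <;> field_simp
end

section
/- Let 0 < α ≤ β < 1 and τ ≥ 1. There exists a constant C = C(α, β) > 0 such that for every open ball B ⊆ ℝⁿ of radius R > 0 and all continuously differentiable functions u, φ : B → ℝ with u > 0 on B and with |u|_B, |φ|_B, |∇u|_B, |∇φ|_B finite, one has [|u+φ|^β − u^β]_{α,B} ≤ C (R^{−τα} + R^{τ(β−α)}(|∇u|_B^β + |∇φ|_B^β)) |φ|_B^{β−α}. -/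
open Real

lemma rpow_subadd {p a b : ℝ} (hp : 0 ≤ p) (hp1 : p ≤ 1) (ha : 0 ≤ a) (hb : 0 ≤ b) :
    (a + b) ^ p ≤ a ^ p + b ^ p := by
  have h := NNReal.rpow_add_le_add_rpow (a.toNNReal) (b.toNNReal) hp hp1
  have h2 := NNReal.coe_le_coe.2 h
  push_cast at h2
  rwa [Real.coe_toNNReal _ ha, Real.coe_toNNReal _ hb] at h2

lemma rpow_abs_diff {p x y : ℝ} (hp : 0 ≤ p) (hp1 : p ≤ 1) (hx : 0 ≤ x) (hy : 0 ≤ y) :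
    |x ^ p - y ^ p| ≤ |x - y| ^ p := by
  wlog h : y ≤ x generalizing x y
  · rw [abs_sub_comm, abs_sub_comm x y]; exact this hy hx (le_of_not_ge h)
  have h1 : x ^ p ≤ (x - y) ^ p + y ^ p := by
    calc x ^ p = ((x - y) + y) ^ p := by ring_nf
    _ ≤ (x - y) ^ p + y ^ p := rpow_subadd hp hp1 (by linarith) hy
  rw [abs_of_nonneg (by linarith : (0:ℝ) ≤ x - y),
    abs_of_nonneg (sub_nonneg.2 (Real.rpow_le_rpow hy h hp))]
  linarith

lemma rpow_abs_diff' {p a b : ℝ} (hp : 0 ≤ p) (hp1 : p ≤ 1) :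
    abs (|a| ^ p - |b| ^ p) ≤ |a - b| ^ p := by
  refine (rpow_abs_diff hp hp1 (abs_nonneg a) (abs_nonneg b)).trans ?_
  exact Real.rpow_le_rpow (abs_nonneg _) (abs_abs_sub_abs_le_abs_sub a b) hp


/-- Let `0 < α ≤ β < 1` and `τ ≥ 1`. There exists `C = C(α, β) > 0` such that for every open
ball `B ⊆ ℝⁿ` of radius `R > 0` and all `C¹` functions `u, φ : B → ℝ` with `u > 0` on `B` and
`|u|_B, |φ|_B, |∇u|_B, |∇φ|_B` finite (bounded by `Mu, Mφ, MDu, MDφ` respectively), the Hölder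
seminorm bound `[|u+φ|^β − u^β]_{α,B} ≤ C (R^{−τα} + R^{τ(β−α)}(|∇u|_B^β + |∇φ|_B^β)) |φ|_B^{β−α}`
holds, stated pointwise for all `x, y ∈ B`. -/
theorem stmt12 (n : ℕ) (α β τ : ℝ) (hα0 : 0 < α) (hαβ : α ≤ β) (hβ1 : β < 1) (hτ : 1 ≤ τ) :
    ∃ C : ℝ, 0 < C ∧ ∀ (c : EuclideanSpace ℝ (Fin n)) (R : ℝ), 0 < R →
      ∀ (u φ : EuclideanSpace ℝ (Fin n) → ℝ) (Mu Mφ MDu MDφ : ℝ),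
        ContDiffOn ℝ 1 u (Metric.ball c R) →
        ContDiffOn ℝ 1 φ (Metric.ball c R) →
        (∀ x ∈ Metric.ball c R, 0 < u x) →
        (∀ x ∈ Metric.ball c R, |u x| ≤ Mu) →
        (∀ x ∈ Metric.ball c R, |φ x| ≤ Mφ) →
        (∀ x ∈ Metric.ball c R, ‖fderiv ℝ u x‖ ≤ MDu) →
        (∀ x ∈ Metric.ball c R, ‖fderiv ℝ φ x‖ ≤ MDφ) →
        ∀ x ∈ Metric.ball c R, ∀ y ∈ Metric.ball c R,
          abs ((|u x + φ x| ^ β - u x ^ β) - (|u y + φ y| ^ β - u y ^ β)) ≤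
            C * (R ^ (-(τ * α)) + R ^ (τ * (β - α)) * (MDu ^ β + MDφ ^ β)) *
              Mφ ^ (β - α) * ‖x - y‖ ^ α := by
  refine ⟨2, by norm_num, ?_⟩
  intro c R hR u φ Mu Mφ MDu MDφ hu hφ hupos hMu hMφ hMDu hMDφ x hx y hy
  have hβ0 : 0 < β := lt_of_lt_of_le hα0 hαβ
  have hβ1' : β ≤ 1 := hβ1.le
  have hcmem : c ∈ Metric.ball c R := Metric.mem_ball_self hR
  have hMφ0 : 0 ≤ Mφ := (abs_nonneg _).trans (hMφ c hcmem)
  have hMDu0 : 0 ≤ MDu := (norm_nonneg _).trans (hMDu c hcmem)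
  have hMDφ0 : 0 ≤ MDφ := (norm_nonneg _).trans (hMDφ c hcmem)
  set d : ℝ := ‖x - y‖ with hd_def
  have hd0 : 0 ≤ d := norm_nonneg _
  set A : ℝ := R ^ (-(τ * α)) with hA_def
  set B : ℝ := R ^ (τ * (β - α)) with hB_def
  set M : ℝ := MDu ^ β + MDφ ^ β with hM_def
  have hA : 0 < A := Real.rpow_pos_of_pos hR _
  have hB : 0 < B := Real.rpow_pos_of_pos hR _
  have hM0 : 0 ≤ M := add_nonneg (Real.rpow_nonneg hMDu0 _) (Real.rpow_nonneg hMDφ0 _)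
  have hP0 : 0 ≤ Mφ ^ (β - α) := Real.rpow_nonneg hMφ0 _
  have hD0 : 0 ≤ d ^ α := Real.rpow_nonneg hd0 _
  have hRHS0 : 0 ≤ 2 * (A + B * M) * Mφ ^ (β - α) * d ^ α := by
    have := mul_nonneg hB.le hM0
    have h1 : 0 ≤ A + B * M := by linarith
    positivity
  -- trivial case x = y
  rcases eq_or_ne x y with rfl | hxy
  · simpa using hRHS0
  have hdpos : 0 < d := by
    rw [hd_def, norm_pos_iff, sub_ne_zero]; exact hxy
  -- pointwise bound
  have key1 : ∀ z ∈ Metric.ball c R, abs (|u z + φ z| ^ β - u z ^ β) ≤ Mφ ^ β := by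
    intro z hz
    have h1 : u z ^ β = |u z| ^ β := by rw [abs_of_pos (hupos z hz)]
    rw [h1]
    refine (rpow_abs_diff' hβ0.le hβ1').trans ?_
    have h2 : u z + φ z - u z = φ z := by ring
    rw [h2]
    exact Real.rpow_le_rpow (abs_nonneg _) (hMφ z hz) hβ0.le
  -- Lipschitz bounds
  have hconv : Convex ℝ (Metric.ball c R) := convex_ball c R
  have hdiffu : ∀ z ∈ Metric.ball c R, DifferentiableAt ℝ u z := fun z hz =>
    (hu.differentiableOn one_ne_zero).differentiableAt (Metric.isOpen_ball.mem_nhds hz)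
  have hdiffφ : ∀ z ∈ Metric.ball c R, DifferentiableAt ℝ φ z := fun z hz =>
    (hφ.differentiableOn one_ne_zero).differentiableAt (Metric.isOpen_ball.mem_nhds hz)
  have lipu : |u x - u y| ≤ MDu * d := by
    simpa [hd_def, norm_sub_rev] using
      Convex.norm_image_sub_le_of_norm_fderiv_le hdiffu hMDu hconv hy hx
  have lipφ : |φ x - φ y| ≤ MDφ * d := by
    simpa [hd_def, norm_sub_rev] using
      Convex.norm_image_sub_le_of_norm_fderiv_le hdiffφ hMDφ hconv hy hx
  set Fx : ℝ := |u x + φ x| ^ β - u x ^ β with hFx_def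
  set Fy : ℝ := |u y + φ y| ^ β - u y ^ β with hFy_def
  -- estimate A : |Fx - Fy| ≤ 2 Mφ^β
  have estA : |Fx - Fy| ≤ 2 * Mφ ^ β := by
    calc |Fx - Fy| ≤ |Fx| + |Fy| := abs_sub _ _
    _ ≤ Mφ ^ β + Mφ ^ β := add_le_add (key1 x hx) (key1 y hy)
    _ = 2 * Mφ ^ β := by ring
  -- estimate B : |Fx - Fy| ≤ 2 M d^β
  have estB : |Fx - Fy| ≤ 2 * M * d ^ β := by
    have h1 : abs (|u x + φ x| ^ β - |u y + φ y| ^ β) ≤ (MDu ^ β + MDφ ^ β) * d ^ β := by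
      refine (rpow_abs_diff' hβ0.le hβ1').trans ?_
      calc |u x + φ x - (u y + φ y)| ^ β ≤ (MDu * d + MDφ * d) ^ β := by
            refine Real.rpow_le_rpow (abs_nonneg _) ?_ hβ0.le
            calc |u x + φ x - (u y + φ y)| = |(u x - u y) + (φ x - φ y)| := by ring_nf
            _ ≤ |u x - u y| + |φ x - φ y| := abs_add_le _ _
            _ ≤ MDu * d + MDφ * d := add_le_add lipu lipφ
      _ = ((MDu + MDφ) * d) ^ β := by ring_nf
      _ = (MDu + MDφ) ^ β * d ^ β :=
            Real.mul_rpow (by linarith) hd0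
      _ ≤ (MDu ^ β + MDφ ^ β) * d ^ β := by
            refine mul_le_mul_of_nonneg_right ?_ (Real.rpow_nonneg hd0 _)
            exact rpow_subadd hβ0.le hβ1' hMDu0 hMDφ0
    have h2 : abs (u x ^ β - u y ^ β) ≤ MDu ^ β * d ^ β := by
      have hrw : u x ^ β - u y ^ β = |u x| ^ β - |u y| ^ β := by
        rw [abs_of_pos (hupos x hx), abs_of_pos (hupos y hy)]
      rw [hrw]
      refine (rpow_abs_diff' hβ0.le hβ1').trans ?_
      calc |u x - u y| ^ β ≤ (MDu * d) ^ β :=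
            Real.rpow_le_rpow (abs_nonneg _) lipu hβ0.le
      _ = MDu ^ β * d ^ β := Real.mul_rpow hMDu0 hd0
    calc |Fx - Fy| = |(|u x + φ x| ^ β - |u y + φ y| ^ β) - (u x ^ β - u y ^ β)| := by
          rw [hFx_def, hFy_def]; ring_nf
    _ ≤ abs (|u x + φ x| ^ β - |u y + φ y| ^ β) + abs (u x ^ β - u y ^ β) := abs_sub _ _
    _ ≤ (MDu ^ β + MDφ ^ β) * d ^ β + MDu ^ β * d ^ β := add_le_add h1 h2
    _ ≤ 2 * M * d ^ β := by
        have : 0 ≤ MDφ ^ β * d ^ β :=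
          mul_nonneg (Real.rpow_nonneg hMDφ0 _) (Real.rpow_nonneg hd0 _)
        rw [hM_def]; nlinarith
  -- Mφ = 0 case
  rcases eq_or_lt_of_le hMφ0 with hMφz | hMφpos
  · have hφx : φ x = 0 := by have := hMφ x hx; rw [← hMφz] at this; simpa using abs_nonpos_iff.mp this
    have hφy : φ y = 0 := by have := hMφ y hy; rw [← hMφz] at this; simpa using abs_nonpos_iff.mp this
    have hFx0 : Fx = 0 := by
      rw [hFx_def, hφx, add_zero, abs_of_pos (hupos x hx), sub_self]
    have hFy0 : Fy = 0 := by
      rw [hFy_def, hφy, add_zero, abs_of_pos (hupos y hy), sub_self]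
    rw [hFx0, hFy0, sub_self, abs_zero]
    exact hRHS0
  -- main case split
  rcases le_or_gt d (R ^ τ * Mφ) with hcase | hcase
  · -- d small : use gradient bound
    have hdβ : d ^ β = d ^ (β - α) * d ^ α := by
      rw [← Real.rpow_add hdpos]; ring_nf
    have hstep : d ^ (β - α) ≤ B * Mφ ^ (β - α) := by
      calc d ^ (β - α) ≤ (R ^ τ * Mφ) ^ (β - α) :=
            Real.rpow_le_rpow hd0 hcase (by linarith)
      _ = (R ^ τ) ^ (β - α) * Mφ ^ (β - α) :=
            Real.mul_rpow (Real.rpow_nonneg hR.le _) hMφ0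
      _ = B * Mφ ^ (β - α) := by rw [hB_def, Real.rpow_mul hR.le]
    calc |Fx - Fy| ≤ 2 * M * d ^ β := estB
    _ = 2 * M * (d ^ (β - α) * d ^ α) := by rw [hdβ]
    _ ≤ 2 * M * (B * Mφ ^ (β - α) * d ^ α) := by
        refine mul_le_mul_of_nonneg_left ?_ (by linarith)
        exact mul_le_mul_of_nonneg_right hstep hD0
    _ = 2 * (B * M) * (Mφ ^ (β - α) * d ^ α) := by ring
    _ ≤ 2 * (A + B * M) * Mφ ^ (β - α) * d ^ α := by
        have h1 : 0 ≤ A * (Mφ ^ (β - α) * d ^ α) :=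
          mul_nonneg hA.le (mul_nonneg hP0 hD0)
        have h2 : 2 * (A + B * M) * Mφ ^ (β - α) * d ^ α
            = 2 * (B * M) * (Mφ ^ (β - α) * d ^ α) + 2 * (A * (Mφ ^ (β - α) * d ^ α)) := by ring
        linarith
  · -- d large : use sup bound
    have hMφβ : Mφ ^ β = Mφ ^ (β - α) * Mφ ^ α := by
      rw [← Real.rpow_add hMφpos]; ring_nf
    have hstep : Mφ ^ α ≤ A * d ^ α := by
      have hMφle : Mφ ≤ d * R ^ (-τ) := by
        rw [Real.rpow_neg hR.le, ← div_eq_mul_inv, le_div_iff₀ (Real.rpow_pos_of_pos hR τ)]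
        calc Mφ * R ^ τ = R ^ τ * Mφ := by ring
        _ ≤ d := hcase.le
      calc Mφ ^ α ≤ (d * R ^ (-τ)) ^ α := Real.rpow_le_rpow hMφ0 hMφle hα0.le
      _ = d ^ α * (R ^ (-τ)) ^ α :=
            Real.mul_rpow hd0 (Real.rpow_nonneg hR.le _)
      _ = A * d ^ α := by
            rw [hA_def, ← Real.rpow_mul hR.le, neg_mul, mul_comm]
    calc |Fx - Fy| ≤ 2 * Mφ ^ β := estA
    _ = 2 * (Mφ ^ (β - α) * Mφ ^ α) := by rw [hMφβ]
    _ ≤ 2 * (Mφ ^ (β - α) * (A * d ^ α)) := by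
        refine mul_le_mul_of_nonneg_left ?_ (by norm_num)
        exact mul_le_mul_of_nonneg_left hstep hP0
    _ = 2 * A * (Mφ ^ (β - α) * d ^ α) := by ring
    _ ≤ 2 * (A + B * M) * Mφ ^ (β - α) * d ^ α := by
        have h1 : 0 ≤ B * M * (Mφ ^ (β - α) * d ^ α) :=
          mul_nonneg (mul_nonneg hB.le hM0) (mul_nonneg hP0 hD0)
        have h2 : 2 * (A + B * M) * Mφ ^ (β - α) * d ^ α
            = 2 * A * (Mφ ^ (β - α) * d ^ α) + 2 * (B * M * (Mφ ^ (β - α) * d ^ α)) := by ring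
        linarith
end

section
/- Let n ≥ 3, ξ ∈ ℝⁿ and λ > 0, and let σ := σ_{ξ,λ} be the Aubin–Talenti bubble. Let h = (h_{μν})_{μ,ν=1}^n : ℝⁿ → ℝ^{n×n} be a continuously differentiable, compactly supported, symmetric matrix-valued function which is trace-free (Σ_{μ=1}^n h_{μμ}(x) = 0 for all x) and divergence-free (Σ_{μ=1}^n ∂_μ h_{μν}(x) = 0 for all x and each ν). Then ∫_{ℝⁿ} Σ_{μ,ν=1}^n h_{μν}(x) ∂_μσ(x) ∂_νσ(x) dx = 0. -/
open Real Finset MeasureTheory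

/-- The Aubin–Talenti bubble `σ_{ξ,λ}(x) := λ^{(n−2)/2}(1+λ²|x−ξ|²)^{-(n−2)/2}`. -/
noncomputable def bubble (n : ℕ) (ξ : EuclideanSpace ℝ (Fin n)) (lam : ℝ)
    (x : EuclideanSpace ℝ (Fin n)) : ℝ :=
  lam ^ (((n : ℝ) - 2) / 2) * (1 + lam ^ 2 * ‖x - ξ‖ ^ 2) ^ (-(((n : ℝ) - 2) / 2))

/-- The partial derivative `∂_μ f(x)` of `f : ℝⁿ → ℝ` in the `μ`-th coordinate direction. -/
noncomputable def pd {n : ℕ} (f : EuclideanSpace ℝ (Fin n) → ℝ) (μ : Fin n)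
    (x : EuclideanSpace ℝ (Fin n)) : ℝ :=
  fderiv ℝ f x (EuclideanSpace.single μ 1)

namespace Stmt18Aux

variable {n : ℕ} {ξ : EuclideanSpace ℝ (Fin n)} {lam : ℝ}

lemma Bpos (x : EuclideanSpace ℝ (Fin n)) : 0 < 1 + lam ^ 2 * ‖x - ξ‖ ^ 2 := by positivity

lemma hasFDerivAt_B (x : EuclideanSpace ℝ (Fin n)) :
    HasFDerivAt (fun y : EuclideanSpace ℝ (Fin n) => 1 + lam ^ 2 * ‖y - ξ‖ ^ 2)
      ((lam ^ 2 * 2) • innerSL ℝ (x - ξ)) x := by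
  have h1 : HasFDerivAt (fun y : EuclideanSpace ℝ (Fin n) => y - ξ)
      (ContinuousLinearMap.id ℝ (EuclideanSpace ℝ (Fin n))) x := (hasFDerivAt_id x).sub_const ξ
  have h2 := h1.norm_sq
  have h3 := (h2.const_mul (lam ^ 2)).const_add 1
  refine h3.congr_fderiv ?_
  ext y
  simp [smul_smul, two_smul]
  ring

lemma hasFDerivAt_Bpow (p : ℝ) (x : EuclideanSpace ℝ (Fin n)) :
    HasFDerivAt (fun y : EuclideanSpace ℝ (Fin n) => (1 + lam ^ 2 * ‖y - ξ‖ ^ 2) ^ p)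
      ((p * (1 + lam ^ 2 * ‖x - ξ‖ ^ 2) ^ (p - 1) * lam ^ 2 * 2) • innerSL ℝ (x - ξ)) x := by
  have h1 := (Real.hasDerivAt_rpow_const (x := 1 + lam ^ 2 * ‖x - ξ‖ ^ 2) (p := p)
    (Or.inl (Bpos x).ne')).comp_hasFDerivAt x (hasFDerivAt_B x)
  refine h1.congr_fderiv ?_
  rw [smul_smul]
  congr 1
  ring

lemma innerSL_single (y : EuclideanSpace ℝ (Fin n)) (μ : Fin n) :
    innerSL ℝ y (EuclideanSpace.single μ 1) = y μ := by
  simp [EuclideanSpace.inner_single_right]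

lemma pd_bubble (μ : Fin n) (x : EuclideanSpace ℝ (Fin n)) :
    pd (bubble n ξ lam) μ x
      = lam ^ (((n : ℝ) - 2) / 2) * (-(((n : ℝ) - 2) / 2)
          * (1 + lam ^ 2 * ‖x - ξ‖ ^ 2) ^ (-(((n : ℝ) - 2) / 2) - 1) * lam ^ 2 * 2) * (x - ξ) μ := by
  have h1 := ((hasFDerivAt_Bpow (ξ := ξ) (lam := lam) (-(((n : ℝ) - 2) / 2)) x).const_mul
    (lam ^ (((n : ℝ) - 2) / 2)))
  rw [pd, show bubble n ξ lam = fun y => lam ^ (((n : ℝ) - 2) / 2)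
      * (1 + lam ^ 2 * ‖y - ξ‖ ^ 2) ^ (-(((n : ℝ) - 2) / 2)) from rfl, h1.fderiv]
  simp [innerSL_single, smul_smul]

lemma hasFDerivAt_coord (ν : Fin n) (x : EuclideanSpace ℝ (Fin n)) :
    HasFDerivAt (fun y : EuclideanSpace ℝ (Fin n) => (y - ξ) ν)
      (EuclideanSpace.proj (𝕜 := ℝ) ν) x := by
  have h1 : HasFDerivAt (fun y : EuclideanSpace ℝ (Fin n) =>
      EuclideanSpace.proj (𝕜 := ℝ) ν y - ξ ν) (EuclideanSpace.proj (𝕜 := ℝ) ν) x :=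
    (EuclideanSpace.proj (𝕜 := ℝ) ν).hasFDerivAt.sub_const (ξ ν)
  exact h1

lemma hasFDerivAt_u (K p : ℝ) (ν : Fin n) (x : EuclideanSpace ℝ (Fin n)) :
    HasFDerivAt (fun y : EuclideanSpace ℝ (Fin n) =>
        K * (1 + lam ^ 2 * ‖y - ξ‖ ^ 2) ^ p * (y - ξ) ν)
      (((K * (1 + lam ^ 2 * ‖x - ξ‖ ^ 2) ^ p) • EuclideanSpace.proj (𝕜 := ℝ) ν)
        + ((x - ξ) ν • ((K * (p * (1 + lam ^ 2 * ‖x - ξ‖ ^ 2) ^ (p - 1) * lam ^ 2 * 2))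
            • innerSL ℝ (x - ξ)))) x := by
  have h1 := ((hasFDerivAt_Bpow (ξ := ξ) (lam := lam) p x).const_mul K).mul
    (hasFDerivAt_coord (ξ := ξ) ν x)
  refine h1.congr_fderiv ?_
  congr 1
  simp only [smul_smul]

lemma pd_u (K p : ℝ) (μ ν : Fin n) (x : EuclideanSpace ℝ (Fin n)) :
    pd (fun y : EuclideanSpace ℝ (Fin n) =>
        K * (1 + lam ^ 2 * ‖y - ξ‖ ^ 2) ^ p * (y - ξ) ν) μ x
      = K * (1 + lam ^ 2 * ‖x - ξ‖ ^ 2) ^ p * (if ν = μ then 1 else 0)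
        + (x - ξ) ν * (K * (p * (1 + lam ^ 2 * ‖x - ξ‖ ^ 2) ^ (p - 1) * lam ^ 2 * 2)) * (x - ξ) μ := by
  rw [pd, (hasFDerivAt_u K p ν x).fderiv]
  simp [innerSL_single, EuclideanSpace.single_apply]
  ring

/-- The constant `K` in the auxiliary vector field. -/
noncomputable def KK (n : ℕ) (lam : ℝ) : ℝ :=
  -2 * (((n : ℝ) - 2) / 2) ^ 2 * (lam ^ (((n : ℝ) - 2) / 2)) ^ 2 * lam ^ 2
    / (2 * (((n : ℝ) - 2) / 2) + 1)

/-- The exponent `p` in the auxiliary vector field. -/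
noncomputable def PP (n : ℕ) : ℝ := -(2 * (((n : ℝ) - 2) / 2) + 1)

/-- The auxiliary vector field `u`. -/
noncomputable def U (n : ℕ) (ξ : EuclideanSpace ℝ (Fin n)) (lam : ℝ) (ν : Fin n)
    (y : EuclideanSpace ℝ (Fin n)) : ℝ :=
  KK n lam * (1 + lam ^ 2 * ‖y - ξ‖ ^ 2) ^ PP n * (y - ξ) ν

lemma key_identity (hn : 3 ≤ n) (μ ν : Fin n) (x : EuclideanSpace ℝ (Fin n)) :
    pd (bubble n ξ lam) μ x * pd (bubble n ξ lam) ν x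
      = pd (U n ξ lam ν) μ x
        - (KK n lam * (1 + lam ^ 2 * ‖x - ξ‖ ^ 2) ^ PP n) * (if ν = μ then 1 else 0) := by
  have hn' : (3 : ℝ) ≤ (n : ℝ) := by exact_mod_cast hn
  rw [show U n ξ lam ν = fun y : EuclideanSpace ℝ (Fin n) =>
      KK n lam * (1 + lam ^ 2 * ‖y - ξ‖ ^ 2) ^ PP n * (y - ξ) ν from rfl]
  rw [pd_u, pd_bubble, pd_bubble, KK, PP]
  rw [show -(2 * (((n : ℝ) - 2) / 2) + 1) - 1
      = (-(((n : ℝ) - 2) / 2) - 1) + (-(((n : ℝ) - 2) / 2) - 1) by ring,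
    Real.rpow_add (Bpos x)]
  rw [show 2 * (((n : ℝ) - 2) / 2) + 1 = (n : ℝ) - 1 by ring]
  have h2a1 : (n : ℝ) - 1 ≠ 0 := by nlinarith
  rcases eq_or_ne ν μ with h' | h'
  · subst h'
    simp only [if_pos rfl, mul_one]
    field_simp
    ring
  · simp only [if_neg h', mul_zero, sub_zero]
    field_simp
    ring

lemma contU (ν : Fin n) : Continuous (U n ξ lam ν) := by
  have contB : Continuous fun y : EuclideanSpace ℝ (Fin n) => 1 + lam ^ 2 * ‖y - ξ‖ ^ 2 := by
    fun_prop
  have contCoord : Continuous fun y : EuclideanSpace ℝ (Fin n) => (y - ξ) ν :=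
    (EuclideanSpace.proj (𝕜 := ℝ) ν).continuous.comp (continuous_id.sub continuous_const)
  exact (continuous_const.mul (contB.rpow_const fun y => Or.inl (Bpos y).ne')).mul contCoord

lemma contPdU (ν μ : Fin n) : Continuous fun x => pd (U n ξ lam ν) μ x := by
  have contB : Continuous fun y : EuclideanSpace ℝ (Fin n) => 1 + lam ^ 2 * ‖y - ξ‖ ^ 2 := by
    fun_prop
  have contCoord : ∀ κ : Fin n, Continuous fun y : EuclideanSpace ℝ (Fin n) => (y - ξ) κ :=
    fun κ => (EuclideanSpace.proj (𝕜 := ℝ) κ).continuous.comp (continuous_id.sub continuous_const)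
  have : (fun x => pd (U n ξ lam ν) μ x) = fun x =>
      KK n lam * (1 + lam ^ 2 * ‖x - ξ‖ ^ 2) ^ PP n * (if ν = μ then 1 else 0)
        + (x - ξ) ν * (KK n lam * (PP n * (1 + lam ^ 2 * ‖x - ξ‖ ^ 2) ^ (PP n - 1) * lam ^ 2 * 2))
          * (x - ξ) μ := by
    funext x
    exact pd_u (KK n lam) (PP n) μ ν x
  rw [this]
  refine Continuous.add ?_ ?_
  · exact ((continuous_const.mul (contB.rpow_const fun y => Or.inl (Bpos y).ne')).mul
      continuous_const)
  · exact (((contCoord ν).mul (continuous_const.mul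
      (((continuous_const.mul (contB.rpow_const fun y => Or.inl (Bpos y).ne')).mul
        continuous_const).mul continuous_const))).mul (contCoord μ))

lemma diffU (ν : Fin n) : Differentiable ℝ (U n ξ lam ν) :=
  fun x => (hasFDerivAt_u (KK n lam) (PP n) ν x).differentiableAt

end Stmt18Aux


open Stmt18Aux

/-- Let `n ≥ 3`, `ξ ∈ ℝⁿ`, `λ > 0`, and let `σ := σ_{ξ,λ}`. Let `h : ℝⁿ → ℝ^{n×n}` be a `C¹`,
compactly supported, symmetric matrix-valued function which is trace-free and divergence-free.
Then `∫_{ℝⁿ} Σ_{μ,ν} h_{μν}(x) ∂_μσ(x) ∂_νσ(x) dx = 0`. -/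
theorem stmt18 (n : ℕ) (hn : 3 ≤ n) (ξ : EuclideanSpace ℝ (Fin n)) (lam : ℝ)
    (hlam : 0 < lam) (h : Fin n → Fin n → EuclideanSpace ℝ (Fin n) → ℝ)
    (hC1 : ∀ μ ν, ContDiff ℝ 1 (h μ ν))
    (hsupp : ∀ μ ν, HasCompactSupport (h μ ν))
    (hsymm : ∀ μ ν, h μ ν = h ν μ)
    (htrace : ∀ x, ∑ μ, h μ μ x = 0)
    (hdiv : ∀ ν x, ∑ μ, pd (h μ ν) μ x = 0) :
    ∫ x, ∑ μ, ∑ ν, h μ ν x * pd (bubble n ξ lam) μ x * pd (bubble n ξ lam) ν x = 0 := by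
  classical
  have diffH : ∀ μ ν, Differentiable ℝ (h μ ν) := fun μ ν => (hC1 μ ν).differentiable one_ne_zero
  -- integrability facts
  have I1 : ∀ (μ ν : Fin n),
      Integrable fun x => pd (h μ ν) μ x * U n ξ lam ν x := by
    intro μ ν
    apply Continuous.integrable_of_hasCompactSupport
    · exact ((ContinuousLinearMap.apply ℝ ℝ (EuclideanSpace.single μ 1)).continuous.comp
        ((hC1 μ ν).continuous_fderiv one_ne_zero)).mul (contU ν)
    · exact ((hsupp μ ν).fderiv ℝ |>.comp_left
        (g := fun L : _ →L[ℝ] ℝ => L (EuclideanSpace.single μ 1)) rfl).mul_right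
  have I2 : ∀ (μ ν : Fin n),
      Integrable fun x => h μ ν x * pd (U n ξ lam ν) μ x := by
    intro μ ν
    apply Continuous.integrable_of_hasCompactSupport
    · exact ((hC1 μ ν).continuous).mul (contPdU ν μ)
    · exact (hsupp μ ν).mul_right
  have I3 : ∀ (μ ν : Fin n), Integrable fun x => h μ ν x * U n ξ lam ν x := fun μ ν =>
    Continuous.integrable_of_hasCompactSupport (((hC1 μ ν).continuous).mul (contU ν))
      (hsupp μ ν).mul_right
  -- integration by parts
  have ibp : ∀ (μ ν : Fin n), ∫ x, h μ ν x * pd (U n ξ lam ν) μ x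
      = - ∫ x, pd (h μ ν) μ x * U n ξ lam ν x := by
    intro μ ν
    exact integral_mul_fderiv_eq_neg_fderiv_mul_of_integrable (I1 μ ν) (I2 μ ν) (I3 μ ν)
      (fun x _ => diffH μ ν x) (fun x _ => diffU ν x)
  -- pointwise reduction of the integrand
  have main : ∀ x, (∑ μ, ∑ ν, h μ ν x * pd (bubble n ξ lam) μ x * pd (bubble n ξ lam) ν x)
      = ∑ μ, ∑ ν, h μ ν x * pd (U n ξ lam ν) μ x := by
    intro x
    have e1 : ∀ μ ν : Fin n, h μ ν x * pd (bubble n ξ lam) μ x * pd (bubble n ξ lam) ν x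
        = h μ ν x * pd (U n ξ lam ν) μ x
          - h μ ν x * (KK n lam * (1 + lam ^ 2 * ‖x - ξ‖ ^ 2) ^ PP n)
            * (if ν = μ then 1 else 0) := by
      intro μ ν
      rw [mul_assoc, key_identity hn μ ν x]
      ring
    simp_rw [e1, Finset.sum_sub_distrib]
    have hzero : (∑ μ : Fin n, ∑ ν : Fin n, h μ ν x
        * (KK n lam * (1 + lam ^ 2 * ‖x - ξ‖ ^ 2) ^ PP n) * (if ν = μ then 1 else 0)) = 0 := by
      have e2 : ∀ μ : Fin n, (∑ ν : Fin n, h μ ν x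
          * (KK n lam * (1 + lam ^ 2 * ‖x - ξ‖ ^ 2) ^ PP n) * (if ν = μ then 1 else 0))
          = h μ μ x * (KK n lam * (1 + lam ^ 2 * ‖x - ξ‖ ^ 2) ^ PP n) := by
        intro μ
        rw [Finset.sum_eq_single μ]
        · simp
        · intro b _ hb
          simp [hb]
        · simp
      simp_rw [e2]
      rw [← Finset.sum_mul, htrace x, zero_mul]
    rw [hzero, sub_zero]
  -- put everything together
  rw [show (fun x => ∑ μ : Fin n, ∑ ν : Fin n,
      h μ ν x * pd (bubble n ξ lam) μ x * pd (bubble n ξ lam) ν x)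
    = fun x => ∑ μ : Fin n, ∑ ν : Fin n, h μ ν x * pd (U n ξ lam ν) μ x from funext main]
  rw [integral_finset_sum _ (fun μ _ => integrable_finset_sum _ (fun ν _ => I2 μ ν))]
  have e3 : ∀ μ : Fin n, (∫ x, ∑ ν, h μ ν x * pd (U n ξ lam ν) μ x)
      = ∑ ν, ∫ x, h μ ν x * pd (U n ξ lam ν) μ x :=
    fun μ => integral_finset_sum _ (fun ν _ => I2 μ ν)
  simp_rw [e3, ibp]
  rw [Finset.sum_comm]
  have e4 : ∀ ν : Fin n, (∑ μ : Fin n, -∫ x, pd (h μ ν) μ x * U n ξ lam ν x) = 0 := by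
    intro ν
    rw [Finset.sum_neg_distrib, ← integral_finset_sum _ (fun μ _ => I1 μ ν)]
    have : (fun x => ∑ μ : Fin n, pd (h μ ν) μ x * U n ξ lam ν x) = fun _ => (0 : ℝ) := by
      funext x
      rw [← Finset.sum_mul, hdiv ν x, zero_mul]
    rw [this, integral_zero, neg_zero]
  simp_rw [e4, Finset.sum_const_zero]
end
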